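/- arXiv:2311.07678 — 3 statements merged into one kernel-verified Lean document; each statement's English description precedes it below -/
import Mathlib

section
/- The homogeneity space C₀(I) = {ω ∈ ℝⁿ | in_ω(I) = I} of an ideal I in K[x₁,…,xₙ] is a linear subspace of ℝⁿ (it is closed under addition and scalar multiplication, and contains 0). -/
open MvPolynomial

noncomputable section

open scoped Classical

/-- Weight of an exponent vector with respect to a weight vector `ω`. -/
def wt {σ : Type*} [Fintype σ] (ω : σ → ℝ) (α : σ →₀ ℕ) : ℝ := ∑ j, ω j * α j

/-- The initial form of a polynomial: the sum of its terms of minimal `ω`-weight. -/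
def initialForm {K : Type*} [Field K] {σ : Type*} [Fintype σ] (ω : σ → ℝ)
    (f : MvPolynomial σ K) : MvPolynomial σ K :=
  ∑ α ∈ f.support.filter (fun α => ∀ β ∈ f.support, wt ω α ≤ wt ω β),
    monomial α (f.coeff α)

/-- The initial ideal of `I` with respect to `ω`. -/
def initialIdeal {K : Type*} [Field K] {σ : Type*} [Fintype σ] (ω : σ → ℝ)
    (I : Ideal (MvPolynomial σ K)) : Ideal (MvPolynomial σ K) :=
  Ideal.span {g | ∃ f ∈ I, g = initialForm ω f}

/-- The homogeneity space of an ideal. -/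
def homogeneitySpace {K : Type*} [Field K] {σ : Type*} [Fintype σ]
    (I : Ideal (MvPolynomial σ K)) : Set (σ → ℝ) :=
  {ω | initialIdeal ω I = I}

namespace HomSpaceAux

variable {K : Type*} [Field K] {σ : Type*} [Fintype σ]

/-- The ω-homogeneous component of weight `r`. -/
def comp (ω : σ → ℝ) (r : ℝ) (f : MvPolynomial σ K) : MvPolynomial σ K :=
  ∑ α ∈ f.support.filter (fun α => wt ω α = r), monomial α (f.coeff α)

lemma coeff_sum_mono (s : Finset (σ →₀ ℕ)) (c : (σ →₀ ℕ) → K) (β : σ →₀ ℕ) :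
    MvPolynomial.coeff β (∑ α ∈ s, (monomial α (c α) : MvPolynomial σ K)) =
      if β ∈ s then c β else 0 := by
  rw [MvPolynomial.coeff_sum]
  simp [MvPolynomial.coeff_monomial]

lemma coeff_comp (ω : σ → ℝ) (r : ℝ) (f : MvPolynomial σ K) (α : σ →₀ ℕ) :
    MvPolynomial.coeff α (comp ω r f) = if wt ω α = r then f.coeff α else 0 := by
  rw [comp, coeff_sum_mono]
  simp only [Finset.mem_filter, MvPolynomial.mem_support_iff]
  by_cases h1 : wt ω α = r
  · by_cases h2 : f.coeff α = 0 <;> simp [h1, h2]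
  · simp [h1]

lemma comp_add (ω : σ → ℝ) (r : ℝ) (f g : MvPolynomial σ K) :
    comp ω r (f + g) = comp ω r f + comp ω r g := by
  ext α
  simp only [coeff_add, coeff_comp]
  split_ifs <;> simp

lemma comp_zero (ω : σ → ℝ) (r : ℝ) : comp ω r (0 : MvPolynomial σ K) = 0 := by
  ext α; simp [coeff_comp]

lemma initialForm_zero (ω : σ → ℝ) : initialForm ω (0 : MvPolynomial σ K) = 0 := by
  simp [initialForm]

/-- If `α0` is a weight-minimal element of the support, the initial form is the
component of weight `wt ω α0`. -/
lemma initialForm_eq_comp (ω : σ → ℝ) (f : MvPolynomial σ K) (α0 : σ →₀ ℕ)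
    (h0 : α0 ∈ f.support) (hmin : ∀ β ∈ f.support, wt ω α0 ≤ wt ω β) :
    initialForm ω f = comp ω (wt ω α0) f := by
  unfold initialForm comp
  apply Finset.sum_congr _ (fun _ _ => rfl)
  apply Finset.filter_congr
  intro β hβ
  constructor
  · intro hβmin
    exact le_antisymm (hβmin α0 h0) (hmin β hβ)
  · intro hβw γ hγ
    rw [hβw]; exact hmin γ hγ

lemma support_sub_initialForm_ssubset (ω : σ → ℝ) (f : MvPolynomial σ K) (α0 : σ →₀ ℕ)
    (h0 : α0 ∈ f.support) (hmin : ∀ β ∈ f.support, wt ω α0 ≤ wt ω β) :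
    (f - initialForm ω f).support ⊂ f.support := by
  rw [initialForm_eq_comp ω f α0 h0 hmin]
  constructor
  · intro α hα
    rw [MvPolynomial.mem_support_iff] at hα ⊢
    intro hc
    apply hα
    rw [coeff_sub, coeff_comp, hc]
    split_ifs <;> simp
  · intro hsub
    have := hsub h0
    rw [MvPolynomial.mem_support_iff] at this
    apply this
    rw [coeff_sub, coeff_comp, if_pos rfl, sub_self]

lemma comp_comp (ω : σ → ℝ) (r m : ℝ) (f : MvPolynomial σ K) :
    comp ω r (comp ω m f) = if r = m then comp ω m f else 0 := by
  split_ifs with h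
  · subst h; ext α
    rw [coeff_comp, coeff_comp]
    split_ifs with h1 <;> simp [coeff_comp, h1]
  · ext α
    rw [coeff_comp, coeff_comp]
    split_ifs with h1 h2 <;> first | rfl | (exfalso; exact h (h1 ▸ h2.symm ▸ rfl))

/-- Descent: if initial forms of elements of `I` stay in `I`, then the
initial ideal equals `I`. -/
lemma initialIdeal_eq_self (ω : σ → ℝ) (I : Ideal (MvPolynomial σ K))
    (h : ∀ f ∈ I, initialForm ω f ∈ I) : initialIdeal ω I = I := by
  apply le_antisymm
  · rw [initialIdeal, Ideal.span_le]
    rintro g ⟨f, hf, rfl⟩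
    exact h f hf
  · intro f hf
    have key : ∀ N : ℕ, ∀ f : MvPolynomial σ K, f.support.card ≤ N → f ∈ I →
        f ∈ initialIdeal ω I := by
      intro N
      induction N with
      | zero =>
        intro f hcard _
        have : f.support = ∅ := Finset.card_eq_zero.mp (Nat.le_zero.mp hcard)
        have : f = 0 := by
          ext α
          by_contra hc
          exact absurd (MvPolynomial.mem_support_iff.mpr (by simpa using hc)) (by simp [this])
        simp [this]
      | succ N ih =>
        intro f hcard hfI
        by_cases hf0 : f = 0
        · simp [hf0]
        · obtain ⟨α0, h0, hmin⟩ := Finset.exists_min_image f.support (wt ω)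
            (Finset.nonempty_of_ne_empty (by simpa using hf0))
          have hss := support_sub_initialForm_ssubset ω f α0 h0 hmin
          have hlt : (f - initialForm ω f).support.card < f.support.card :=
            Finset.card_lt_card hss
          have hg : (f - initialForm ω f) ∈ I := I.sub_mem hfI (h f hfI)
          have hgin : (f - initialForm ω f) ∈ initialIdeal ω I :=
            ih _ (by omega) hg
          have hin : initialForm ω f ∈ initialIdeal ω I :=
            Ideal.subset_span ⟨f, hfI, rfl⟩
          have : f = (f - initialForm ω f) + initialForm ω f := by ring
          rw [this]
          exact Ideal.add_mem _ hgin hin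
    exact key f.support.card f le_rfl hf

/-- Components of elements of `I` lie in `I`. -/
lemma comp_mem (ω : σ → ℝ) (I : Ideal (MvPolynomial σ K))
    (h : ∀ f ∈ I, initialForm ω f ∈ I) :
    ∀ f ∈ I, ∀ r : ℝ, comp ω r f ∈ I := by
  have key : ∀ N : ℕ, ∀ f : MvPolynomial σ K, f.support.card ≤ N → f ∈ I →
      ∀ r : ℝ, comp ω r f ∈ I := by
    intro N
    induction N with
    | zero =>
      intro f hcard _ r
      have : f.support = ∅ := Finset.card_eq_zero.mp (Nat.le_zero.mp hcard)
      have hf : f = 0 := by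
        ext α
        by_contra hc
        exact absurd (MvPolynomial.mem_support_iff.mpr (by simpa using hc)) (by simp [this])
      simp [hf, comp_zero]
    | succ N ih =>
      intro f hcard hfI r
      by_cases hf0 : f = 0
      · simp [hf0, comp_zero]
      · obtain ⟨α0, h0, hmin⟩ := Finset.exists_min_image f.support (wt ω)
          (Finset.nonempty_of_ne_empty (by simpa using hf0))
        have heq := initialForm_eq_comp ω f α0 h0 hmin
        have hss := support_sub_initialForm_ssubset ω f α0 h0 hmin
        have hlt : (f - initialForm ω f).support.card < f.support.card :=
          Finset.card_lt_card hss
        have hinI : initialForm ω f ∈ I := h f hfI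
        have hg : (f - initialForm ω f) ∈ I := I.sub_mem hfI hinI
        have hdecomp : f = (f - initialForm ω f) + initialForm ω f := by ring
        have : comp ω r f = comp ω r (f - initialForm ω f) + comp ω r (initialForm ω f) := by
          conv_lhs => rw [hdecomp]
          exact comp_add ω r _ _
        rw [this]
        apply I.add_mem (ih _ (by omega) hg r)
        rw [heq, comp_comp]
        split_ifs
        · rw [← heq]; exact hinI
        · exact I.zero_mem
  intro f hfI r
  exact key f.support.card f le_rfl hfI r

lemma wt_add_vec (ω ω' : σ → ℝ) (α : σ →₀ ℕ) :
    wt (ω + ω') α = wt ω α + wt ω' α := by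
  unfold wt
  rw [← Finset.sum_add_distrib]
  apply Finset.sum_congr rfl
  intro j _
  simp [add_mul]

lemma wt_smul (c : ℝ) (ω : σ → ℝ) (α : σ →₀ ℕ) :
    wt (c • ω) α = c * wt ω α := by
  unfold wt
  rw [Finset.mul_sum]
  apply Finset.sum_congr rfl
  intro j _
  simp [mul_assoc]

lemma comp_smul_wt (c : ℝ) (hc : c ≠ 0) (ω : σ → ℝ) (r : ℝ) (f : MvPolynomial σ K) :
    comp (c • ω) r f = comp ω (r / c) f := by
  ext α
  rw [coeff_comp, coeff_comp, wt_smul]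
  have : c * wt ω α = r ↔ wt ω α = r / c := by
    rw [eq_div_iff hc, mul_comm]
  simp only [this]

/-- `(ω+ω')`-components of an `ω`-homogeneous polynomial are `ω'`-components. -/
lemma comp_addwt_of_homog (ω ω' : σ → ℝ) (r m : ℝ) (f : MvPolynomial σ K) :
    comp (ω + ω') r (comp ω m f) = comp ω' (r - m) (comp ω m f) := by
  ext α
  rw [coeff_comp, coeff_comp, coeff_comp, coeff_comp, wt_add_vec]
  split_ifs with h1 h2 h3 h4 h5 h6 <;> try rfl
  · exact absurd (by linarith : wt ω' α = r - m) h3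
  · exact absurd (by linarith : wt ω α + wt ω' α = r) h1

/-- Key lemma for additivity: `(ω+ω')`-components of elements of `I` stay in `I`. -/
lemma comp_add_wt_mem (ω ω' : σ → ℝ) (I : Ideal (MvPolynomial σ K))
    (hω : ∀ f ∈ I, initialForm ω f ∈ I)
    (hω' : ∀ f ∈ I, ∀ r : ℝ, comp ω' r f ∈ I) :
    ∀ f ∈ I, ∀ r : ℝ, comp (ω + ω') r f ∈ I := by
  have key : ∀ N : ℕ, ∀ f : MvPolynomial σ K, f.support.card ≤ N → f ∈ I →
      ∀ r : ℝ, comp (ω + ω') r f ∈ I := by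
    intro N
    induction N with
    | zero =>
      intro f hcard _ r
      have : f.support = ∅ := Finset.card_eq_zero.mp (Nat.le_zero.mp hcard)
      have hf : f = 0 := by
        ext α
        by_contra hc
        exact absurd (MvPolynomial.mem_support_iff.mpr (by simpa using hc)) (by simp [this])
      simp [hf, comp_zero]
    | succ N ih =>
      intro f hcard hfI r
      by_cases hf0 : f = 0
      · simp [hf0, comp_zero]
      · obtain ⟨α0, h0, hmin⟩ := Finset.exists_min_image f.support (wt ω)
          (Finset.nonempty_of_ne_empty (by simpa using hf0))
        have heq := initialForm_eq_comp ω f α0 h0 hmin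
        have hss := support_sub_initialForm_ssubset ω f α0 h0 hmin
        have hlt : (f - initialForm ω f).support.card < f.support.card :=
          Finset.card_lt_card hss
        have hinI : initialForm ω f ∈ I := hω f hfI
        have hg : (f - initialForm ω f) ∈ I := I.sub_mem hfI hinI
        have hdecomp : f = (f - initialForm ω f) + initialForm ω f := by ring
        have hsplit : comp (ω + ω') r f =
            comp (ω + ω') r (f - initialForm ω f) + comp (ω + ω') r (initialForm ω f) := by
          conv_lhs => rw [hdecomp]
          exact comp_add _ r _ _
        rw [hsplit]
        apply I.add_mem (ih _ (by omega) hg r)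
        rw [heq, comp_addwt_of_homog, ← heq]
        exact hω' _ hinI _
  intro f hfI r
  exact key f.support.card f le_rfl hfI r

lemma initialForm_zero_wt (f : MvPolynomial σ K) :
    initialForm (0 : σ → ℝ) f = f := by
  have hwt : ∀ α : σ →₀ ℕ, wt (0 : σ → ℝ) α = 0 := by
    intro α; simp [wt]
  unfold initialForm
  have : f.support.filter (fun α => ∀ β ∈ f.support, wt (0 : σ → ℝ) α ≤ wt (0 : σ → ℝ) β)
      = f.support := by
    apply Finset.filter_true_of_mem
    intro α _ β _
    simp [hwt]
  rw [this, MvPolynomial.support_sum_monomial_coeff]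

end HomSpaceAux

open HomSpaceAux in
/-- the homogeneity space is a linear subspace of ℝⁿ. -/
theorem homogeneitySpace_is_linear_subspace {K : Type*} [Field K] {n : ℕ}
    (I : Ideal (MvPolynomial (Fin n) K)) :
    (0 ∈ homogeneitySpace I) ∧
    (∀ ω ω' : Fin n → ℝ, ω ∈ homogeneitySpace I → ω' ∈ homogeneitySpace I →
      ω + ω' ∈ homogeneitySpace I) ∧
    (∀ (c : ℝ) (ω : Fin n → ℝ), ω ∈ homogeneitySpace I → c • ω ∈ homogeneitySpace I) := by
  have hzero : (0 : Fin n → ℝ) ∈ homogeneitySpace I := by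
    show initialIdeal 0 I = I
    apply initialIdeal_eq_self
    intro f hf
    rw [initialForm_zero_wt]
    exact hf
  have hinit : ∀ ω : Fin n → ℝ, ω ∈ homogeneitySpace I →
      ∀ f ∈ I, initialForm ω f ∈ I := by
    intro ω hω f hf
    have : initialForm ω f ∈ initialIdeal ω I := Ideal.subset_span ⟨f, hf, rfl⟩
    rwa [hω] at this
  refine ⟨hzero, ?_, ?_⟩
  · intro ω ω' hω hω'
    show initialIdeal (ω + ω') I = I
    apply initialIdeal_eq_self
    intro f hf
    by_cases hf0 : f = 0
    · rw [hf0, initialForm_zero]; exact I.zero_mem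
    · obtain ⟨α0, h0, hmin⟩ := Finset.exists_min_image f.support (wt (ω + ω'))
        (Finset.nonempty_of_ne_empty (by simpa using hf0))
      rw [initialForm_eq_comp (ω + ω') f α0 h0 hmin]
      exact comp_add_wt_mem ω ω' I (hinit ω hω)
        (comp_mem ω' I (hinit ω' hω')) f hf _
  · intro c ω hω
    by_cases hc : c = 0
    · have : c • ω = 0 := by
        ext j; simp [hc]
      rw [this]
      exact hzero
    · show initialIdeal (c • ω) I = I
      apply initialIdeal_eq_self
      intro f hf
      by_cases hf0 : f = 0
      · rw [hf0, initialForm_zero]; exact I.zero_mem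
      · obtain ⟨α0, h0, hmin⟩ := Finset.exists_min_image f.support (wt (c • ω))
          (Finset.nonempty_of_ne_empty (by simpa using hf0))
        rw [initialForm_eq_comp (c • ω) f α0 h0 hmin, comp_smul_wt c hc]
        exact comp_mem ω I (hinit ω hω) f hf _

end
end

section
/- A vector ω ∈ ℝⁿ lies in the homogeneity space C₀(I) of an ideal I if and only if I has a generating set consisting of polynomials g with in_ω(g) = g (i.e., ω-homogeneous polynomials). -/
open MvPolynomial

noncomputable section

open scoped Classical

lemma wt_eq_weight {σ : Type*} [Fintype σ] (ω : σ → ℝ) (α : σ →₀ ℕ) :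
    wt ω α = Finsupp.weight ω α := by
  rw [wt, Finsupp.weight_apply, Finsupp.sum]
  rw [Finset.sum_subset (Finset.subset_univ α.support)]
  · exact Finset.sum_congr rfl fun j _ => by rw [nsmul_eq_mul, mul_comm]
  · intro j _ hj
    simp [Finsupp.notMem_support_iff.mp hj]

lemma initialForm_zero {K : Type*} [Field K] {σ : Type*} [Fintype σ] (ω : σ → ℝ) :
    initialForm ω (0 : MvPolynomial σ K) = 0 := by
  simp [initialForm]

/-- For nonzero `f`, the initial form is the weighted homogeneous component of minimal weight. -/
lemma initialForm_eq_component {K : Type*} [Field K] {σ : Type*} [Fintype σ] (ω : σ → ℝ)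
    (f : MvPolynomial σ K) (hf : f ≠ 0) :
    initialForm ω f =
      weightedHomogeneousComponent ω
        ((f.support.image (Finsupp.weight ω)).min'
          ((Finset.image_nonempty).mpr (support_nonempty.mpr hf))) f := by
  classical
  set m := (f.support.image (Finsupp.weight ω)).min'
      ((Finset.image_nonempty).mpr (support_nonempty.mpr hf)) with hm
  rw [initialForm, weightedHomogeneousComponent_apply]
  apply Finset.sum_congr _ (fun _ _ => rfl)
  apply Finset.filter_congr
  intro α hα
  simp only [wt_eq_weight]
  constructor
  · intro h
    apply le_antisymm
    · obtain ⟨β, hβ, hβm⟩ := Finset.mem_image.mp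
        (Finset.min'_mem (f.support.image (Finsupp.weight ω))
          ((Finset.image_nonempty).mpr (support_nonempty.mpr hf)))
      rw [hm, ← hβm]
      exact h β hβ
    · exact Finset.min'_le _ _ (Finset.mem_image_of_mem _ hα)
  · intro h β hβ
    rw [h]
    exact Finset.min'_le _ _ (Finset.mem_image_of_mem _ hβ)

/-- A weighted homogeneous polynomial is its own initial form. -/
lemma initialForm_of_isWeightedHomogeneous {K : Type*} [Field K] {σ : Type*} [Fintype σ]
    {ω : σ → ℝ} {g : MvPolynomial σ K} {m : ℝ} (hg : g.IsWeightedHomogeneous ω m) :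
    initialForm ω g = g := by
  rw [initialForm]
  have : g.support.filter (fun α => ∀ β ∈ g.support, wt ω α ≤ wt ω β) = g.support := by
    apply Finset.filter_true_of_mem
    intro α hα β hβ
    rw [wt_eq_weight, wt_eq_weight,
      hg (mem_support_iff.mp hα), hg (mem_support_iff.mp hβ)]
  rw [this, ← as_sum]

/-- If `g` is its own initial form, it is weighted homogeneous (of some degree) or zero. -/
lemma homogeneous_of_initialForm_eq {K : Type*} [Field K] {σ : Type*} [Fintype σ]
    {ω : σ → ℝ} {g : MvPolynomial σ K} (hg : initialForm ω g = g) :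
    SetLike.IsHomogeneousElem (weightedHomogeneousSubmodule K ω) g := by
  by_cases h0 : g = 0
  · exact ⟨0, h0 ▸ Submodule.zero_mem _⟩
  · obtain ⟨m, h1⟩ : ∃ m, initialForm ω g = weightedHomogeneousComponent ω m g :=
      ⟨_, initialForm_eq_component ω g h0⟩
    refine ⟨m, ?_⟩
    rw [mem_weightedHomogeneousSubmodule, ← hg, h1]
    exact weightedHomogeneousComponent_isWeightedHomogeneous _ _

/-- `ω ∈ C₀(I)` iff `I` is generated by `ω`-homogeneous polynomials. -/
theorem mem_homogeneitySpace_iff_exists_homogeneous_generators {K : Type*} [Field K] {n : ℕ}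
    (I : Ideal (MvPolynomial (Fin n) K)) (ω : Fin n → ℝ) :
    ω ∈ homogeneitySpace I ↔
      ∃ S : Set (MvPolynomial (Fin n) K),
        I = Ideal.span S ∧ ∀ g ∈ S, initialForm ω g = g := by
  constructor
  · intro hω
    refine ⟨{g | ∃ f ∈ I, g = initialForm ω f}, (hω.symm : _), ?_⟩
    rintro g ⟨f, _, rfl⟩
    by_cases h0 : f = 0
    · simp [h0, initialForm_zero]
    · rw [initialForm_eq_component ω f h0]
      exact initialForm_of_isWeightedHomogeneous
        (weightedHomogeneousComponent_isWeightedHomogeneous _ _)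
  · rintro ⟨S, rfl, hS⟩
    letI : GradedAlgebra (weightedHomogeneousSubmodule K ω) := weightedGradedAlgebra K ω
    have hhom : (Ideal.span S).IsHomogeneous (weightedHomogeneousSubmodule K ω) :=
      Ideal.homogeneous_span _ S fun g hg => homogeneous_of_initialForm_eq (hS g hg)
    show initialIdeal ω (Ideal.span S) = Ideal.span S
    apply le_antisymm
    · rw [initialIdeal, Ideal.span_le]
      rintro g ⟨f, hf, rfl⟩
      by_cases h0 : f = 0
      · simp [h0, initialForm_zero, Ideal.zero_mem]
      · rw [initialForm_eq_component ω f h0]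
        have := hhom ((f.support.image (Finsupp.weight ω)).min'
          ((Finset.image_nonempty).mpr (support_nonempty.mpr h0))) hf
        rwa [← DirectSum.Decomposition.decompose'_eq,
          MvPolynomial.weightedDecomposition.decompose'_apply] at this
    · rw [initialIdeal]
      apply Ideal.span_mono
      intro g hg
      exact ⟨g, Ideal.subset_span hg, (hS g hg).symm⟩

end
end

section
/- Let φ: K[x₁,…,xₙ] → K[t₁,…,t_m] be a ring homomorphism, J = ⟨x_i − φ(x_i)⟩ the elimination ideal, and b = (b′, b″) ∈ ℤⁿ × ℤᵐ an element of the homogeneity space C₀(J). Then b′ belongs to the homogeneity space of ker(φ), i.e., in_{b′}(ker φ) = ker φ. -/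
open MvPolynomial

noncomputable section

open scoped Classical

/-- The elimination (graph) ideal of a polynomial map `φ`, living in
`K[x₁,…,xₙ,t₁,…,t_m]`. -/
def graphIdeal {K : Type*} [Field K] {n m : ℕ}
    (φ : MvPolynomial (Fin n) K →ₐ[K] MvPolynomial (Fin m) K) :
    Ideal (MvPolynomial (Fin n ⊕ Fin m) K) :=
  Ideal.span (Set.range fun i : Fin n =>
    X (Sum.inl i) - rename Sum.inr (φ (X i)))

lemma coeff_initialForm {K : Type*} [Field K] {σ : Type*} [Fintype σ] (ω : σ → ℝ)
    (f : MvPolynomial σ K) (α : σ →₀ ℕ) :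
    (initialForm ω f).coeff α =
      if α ∈ f.support.filter (fun α => ∀ β ∈ f.support, wt ω α ≤ wt ω β)
      then f.coeff α else 0 := by
  unfold initialForm
  rw [coeff_sum]
  simp only [coeff_monomial]
  rw [Finset.sum_ite_eq' _ α (fun β => f.coeff β)]

lemma support_sub_initialForm {K : Type*} [Field K] {σ : Type*} [Fintype σ] (ω : σ → ℝ)
    (f : MvPolynomial σ K) :
    (f - initialForm ω f).support ⊆
      f.support \ f.support.filter (fun α => ∀ β ∈ f.support, wt ω α ≤ wt ω β) := by
  intro α hα
  rw [mem_support_iff] at hα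
  rw [coeff_sub, coeff_initialForm] at hα
  by_cases h : α ∈ f.support.filter (fun α => ∀ β ∈ f.support, wt ω α ≤ wt ω β)
  · rw [if_pos h, sub_self] at hα
    exact absurd rfl hα
  · rw [if_neg h, sub_zero] at hα
    exact Finset.mem_sdiff.2 ⟨mem_support_iff.2 hα, h⟩

lemma wt_mapDomain_inl {n m : ℕ} (b1 : Fin n → ℝ) (b2 : Fin m → ℝ) (α : Fin n →₀ ℕ) :
    wt (Sum.elim b1 b2) (Finsupp.mapDomain Sum.inl α) = wt b1 α := by
  unfold wt
  rw [Fintype.sum_sum_type]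
  have h1 : ∀ i, (Finsupp.mapDomain (Sum.inl : Fin n → Fin n ⊕ Fin m) α) (Sum.inl i) = α i :=
    fun i => Finsupp.mapDomain_apply Sum.inl_injective α i
  have h2 : ∀ j, (Finsupp.mapDomain (Sum.inl : Fin n → Fin n ⊕ Fin m) α) (Sum.inr j) = 0 :=
    fun j => Finsupp.mapDomain_notin_range α _ (by simp)
  simp [h1, h2]

lemma initialForm_rename_inl {K : Type*} [Field K] {n m : ℕ} (b1 : Fin n → ℝ) (b2 : Fin m → ℝ)
    (f : MvPolynomial (Fin n) K) :
    initialForm (Sum.elim b1 b2) (rename Sum.inl f) = rename Sum.inl (initialForm b1 f) := by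
  have hinj : Function.Injective (Sum.inl : Fin n → Fin n ⊕ Fin m) := Sum.inl_injective
  have hinj' := Finsupp.mapDomain_injective (M := ℕ) hinj
  have hsupp : ((rename Sum.inl) f).support = f.support.image (Finsupp.mapDomain Sum.inl) :=
    support_rename_of_injective hinj
  unfold initialForm
  rw [hsupp, Finset.filter_image]
  rw [Finset.sum_image (fun a _ b _ h => hinj' h), map_sum]
  refine Finset.sum_congr ?_ (fun α hα => ?_)
  · ext α
    simp only [Finset.mem_filter, Finset.mem_image]
    constructor
    · rintro ⟨h1, h2⟩
      refine ⟨h1, fun β hβ => ?_⟩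
      have := h2 _ ⟨β, hβ, rfl⟩
      rwa [wt_mapDomain_inl, wt_mapDomain_inl] at this
    · rintro ⟨h1, h2⟩
      refine ⟨h1, ?_⟩
      rintro _ ⟨β, hβ, rfl⟩
      rw [wt_mapDomain_inl, wt_mapDomain_inl]
      exact h2 β hβ
  · rw [coeff_rename_mapDomain _ hinj, rename_monomial]

def psiAux {K : Type*} [Field K] {n m : ℕ}
    (φ : MvPolynomial (Fin n) K →ₐ[K] MvPolynomial (Fin m) K) :
    MvPolynomial (Fin n ⊕ Fin m) K →ₐ[K] MvPolynomial (Fin m) K :=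
  aeval (Sum.elim (fun i => φ (X i)) X)

lemma psiAux_rename_inr {K : Type*} [Field K] {n m : ℕ}
    (φ : MvPolynomial (Fin n) K →ₐ[K] MvPolynomial (Fin m) K)
    (q : MvPolynomial (Fin m) K) : psiAux φ (rename Sum.inr q) = q := by
  unfold psiAux
  rw [aeval_rename]
  simp [Sum.elim_comp_inr, aeval_X_left_apply]

lemma psiAux_rename_inl {K : Type*} [Field K] {n m : ℕ}
    (φ : MvPolynomial (Fin n) K →ₐ[K] MvPolynomial (Fin m) K)
    (f : MvPolynomial (Fin n) K) : psiAux φ (rename Sum.inl f) = φ f := by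
  unfold psiAux
  rw [aeval_rename]
  conv_rhs => rw [aeval_unique φ]
  rfl

lemma X_sub_mem {K : Type*} [Field K] {n m : ℕ}
    (φ : MvPolynomial (Fin n) K →ₐ[K] MvPolynomial (Fin m) K)
    (s : Fin n ⊕ Fin m) :
    X s - rename Sum.inr (psiAux φ (X s)) ∈ graphIdeal φ := by
  rcases s with i | j
  · have : psiAux φ (X (Sum.inl i : Fin n ⊕ Fin m)) = φ (X i) := by
      unfold psiAux; rw [aeval_X]; rfl
    rw [this]
    exact Ideal.subset_span ⟨i, rfl⟩
  · have : psiAux φ (X (Sum.inr j : Fin n ⊕ Fin m)) = X j := by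
      unfold psiAux; rw [aeval_X]; rfl
    rw [this, rename_X, sub_self]
    exact zero_mem _

lemma sub_rename_psi_mem {K : Type*} [Field K] {n m : ℕ}
    (φ : MvPolynomial (Fin n) K →ₐ[K] MvPolynomial (Fin m) K)
    (g : MvPolynomial (Fin n ⊕ Fin m) K) :
    g - rename Sum.inr (psiAux φ g) ∈ graphIdeal φ := by
  induction g using MvPolynomial.induction_on with
  | C a => simp [algHom_C]
  | add p q hp hq =>
    have : p + q - rename Sum.inr (psiAux φ (p + q))
        = (p - rename Sum.inr (psiAux φ p)) + (q - rename Sum.inr (psiAux φ q)) := by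
      rw [map_add, map_add]; ring
    rw [this]; exact add_mem hp hq
  | mul_X p s hp =>
    have : p * X s - rename Sum.inr (psiAux φ (p * X s))
        = (p - rename Sum.inr (psiAux φ p)) * X s
          + rename Sum.inr (psiAux φ p) * (X s - rename Sum.inr (psiAux φ (X s))) := by
      rw [map_mul, map_mul]; ring
    rw [this]
    exact add_mem (Ideal.mul_mem_right _ _ hp) (Ideal.mul_mem_left _ _ (X_sub_mem φ s))

lemma graphIdeal_eq_ker {K : Type*} [Field K] {n m : ℕ}
    (φ : MvPolynomial (Fin n) K →ₐ[K] MvPolynomial (Fin m) K) :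
    graphIdeal φ = RingHom.ker (psiAux φ).toRingHom := by
  apply le_antisymm
  · rw [graphIdeal, Ideal.span_le]
    rintro _ ⟨i, rfl⟩
    have h1 : psiAux φ (X (Sum.inl i : Fin n ⊕ Fin m)) = φ (X i) := by
      unfold psiAux; rw [aeval_X]; rfl
    simp [RingHom.mem_ker, map_sub, h1, psiAux_rename_inr]
  · intro g hg
    have := sub_rename_psi_mem φ g
    rw [RingHom.mem_ker] at hg
    rw [show psiAux φ g = 0 from hg, map_zero, sub_zero] at this
    exact this

lemma card_support_sub_initialForm_lt {K : Type*} [Field K] {σ : Type*} [Fintype σ]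
    (ω : σ → ℝ) (f : MvPolynomial σ K) (hf : f ≠ 0) :
    (f - initialForm ω f).support.card < f.support.card := by
  classical
  set S := f.support.filter (fun α => ∀ β ∈ f.support, wt ω α ≤ wt ω β) with hS
  have hne : f.support.Nonempty := support_nonempty.2 hf
  obtain ⟨α, hα, hmin⟩ := Finset.exists_min_image f.support (wt ω) hne
  have hαS : α ∈ S := Finset.mem_filter.2 ⟨hα, hmin⟩
  have hSsub : S ⊆ f.support := Finset.filter_subset _ _
  have h1 : (f - initialForm ω f).support.card ≤ (f.support \ S).card :=
    Finset.card_le_card (support_sub_initialForm ω f)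
  have h2 : (f.support \ S).card = f.support.card - S.card := Finset.card_sdiff_of_subset hSsub
  have h3 : 0 < S.card := Finset.card_pos.2 ⟨α, hαS⟩
  have h4 : 0 < f.support.card := Finset.card_pos.2 hne
  omega

/-- if `b = (b′, b″) ∈ C₀(J)` then `b′` lies in the homogeneity space of
`ker φ`. -/
theorem xPart_mem_homogeneitySpace_ker {K : Type*} [Field K] {n m : ℕ}
    (φ : MvPolynomial (Fin n) K →ₐ[K] MvPolynomial (Fin m) K)
    (b' : Fin n → ℤ) (b'' : Fin m → ℤ)
    (hb : (Sum.elim (fun i => (b' i : ℝ)) (fun j => (b'' j : ℝ))) ∈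
      homogeneitySpace (graphIdeal φ)) :
    (fun i => (b' i : ℝ)) ∈ homogeneitySpace (RingHom.ker φ.toRingHom) := by
  classical
  have hbJ : initialIdeal (Sum.elim (fun i => (b' i : ℝ)) (fun j => (b'' j : ℝ)))
      (graphIdeal φ) = graphIdeal φ := hb
  -- membership of renamed kernel elements in the graph ideal
  have hker : ∀ f : MvPolynomial (Fin n) K, f ∈ RingHom.ker φ.toRingHom →
      rename Sum.inl f ∈ graphIdeal φ := by
    intro f hf
    rw [RingHom.mem_ker] at hf
    rw [graphIdeal_eq_ker, RingHom.mem_ker]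
    show psiAux φ (rename Sum.inl f) = 0
    rw [psiAux_rename_inl]
    exact hf
  -- Step E: initial forms of kernel elements are in the kernel
  have E : ∀ f ∈ RingHom.ker φ.toRingHom,
      initialForm (fun i => (b' i : ℝ)) f ∈ RingHom.ker φ.toRingHom := by
    intro f hf
    have h1 : rename Sum.inl f ∈ graphIdeal φ := hker f hf
    have h2 : initialForm (Sum.elim (fun i => (b' i : ℝ)) (fun j => (b'' j : ℝ)))
        (rename Sum.inl f) ∈
        initialIdeal (Sum.elim (fun i => (b' i : ℝ)) (fun j => (b'' j : ℝ))) (graphIdeal φ) :=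
      Ideal.subset_span ⟨_, h1, rfl⟩
    rw [hbJ, initialForm_rename_inl, graphIdeal_eq_ker, RingHom.mem_ker] at h2
    rw [RingHom.mem_ker]
    show φ (initialForm (fun i => (b' i : ℝ)) f) = 0
    have h3 : psiAux φ (rename Sum.inl (initialForm (fun i => (b' i : ℝ)) f))
        = φ (initialForm (fun i => (b' i : ℝ)) f) := psiAux_rename_inl φ _
    rw [← h3]
    exact h2
  -- Step F: the initial ideal is contained in the kernel
  have F : initialIdeal (fun i => (b' i : ℝ)) (RingHom.ker φ.toRingHom)
      ≤ RingHom.ker φ.toRingHom := by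
    rw [initialIdeal, Ideal.span_le]
    rintro _ ⟨f, hf, rfl⟩
    exact E f hf
  -- Step G: the kernel is contained in the initial ideal (induction on support size)
  have G : ∀ N : ℕ, ∀ f : MvPolynomial (Fin n) K, f.support.card ≤ N →
      f ∈ RingHom.ker φ.toRingHom →
      f ∈ initialIdeal (fun i => (b' i : ℝ)) (RingHom.ker φ.toRingHom) := by
    intro N
    induction N with
    | zero =>
      intro f hcard hf
      have : f = 0 := by
        rw [← support_eq_empty, ← Finset.card_eq_zero]
        omega
      rw [this]
      exact zero_mem _
    | succ N ih =>
      intro f hcard hf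
      by_cases hf0 : f = 0
      · rw [hf0]; exact zero_mem _
      · have hg : initialForm (fun i => (b' i : ℝ)) f ∈
            initialIdeal (fun i => (b' i : ℝ)) (RingHom.ker φ.toRingHom) :=
          Ideal.subset_span ⟨f, hf, rfl⟩
        have hgker : initialForm (fun i => (b' i : ℝ)) f ∈ RingHom.ker φ.toRingHom := E f hf
        have hsubker : f - initialForm (fun i => (b' i : ℝ)) f ∈ RingHom.ker φ.toRingHom :=
          sub_mem hf hgker
        have hlt : (f - initialForm (fun i => (b' i : ℝ)) f).support.card ≤ N := by
          have := card_support_sub_initialForm_lt (fun i => (b' i : ℝ)) f hf0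
          omega
        have hrest := ih _ hlt hsubker
        have hdecomp : f = initialForm (fun i => (b' i : ℝ)) f
            + (f - initialForm (fun i => (b' i : ℝ)) f) := by ring
        rw [hdecomp]
        exact add_mem hg hrest
  show initialIdeal (fun i => (b' i : ℝ)) (RingHom.ker φ.toRingHom) = RingHom.ker φ.toRingHom
  exact le_antisymm F (fun f hf => G _ f le_rfl hf)

end
end
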